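/- Exchange lemma for the variable-capacity problem: Let V : {1,…,N} → {L,H} be an advertisement sequence with V_k = L and V_{k+1} = H for some 1 ≤ k ≤ N−1, and let Q be the sequence obtained from V by swapping these two entries (Q_k = H, Q_{k+1} = L, Q_i = V_i for all other i). Then for every initial reputation R_1 ∈ [0,1], the full-fill total profits satisfy Π(Q, R_1) ≥ Π(V, R_1). -/

import Mathlib

/-!
Write reputations through their distance `1 - R` to full reputation. Advertising at level `a`
multiplies this distance by `1 - a ^ α`, and a period with positive demand multiplies it by
`1 - w`, so all these updates commute. Swapping `(L, H)` to `(H, L)` therefore changes nothing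
except that the higher reputation reached after `H` may already have positive demand, which
gives an extra `w`-update; as the demand is monotone in reputation, the post-advertisement
reputation of the swapped sequence is at least as high in every period. The total
advertisement cost is unchanged.
-/

noncomputable section

/-- Post-advertisement reputation map. -/
def frep (α R a : ℝ) : ℝ := R + (1 - R) * a ^ α

/-- Demand function. -/
def dem (Λ q x : ℝ) : ℝ := if 0 < x then max 0 (Λ * (1 - q / x)) else 0

/-- Full-fill reputation trajectory (0-indexed periods). -/
def rep (α w Λ q : ℝ) (A : ℕ → ℝ) (R1 : ℝ) : ℕ → ℝ
  | 0 => R1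
  | i + 1 =>
      let R' := frep α (rep α w Λ q A R1 i) (A i)
      if 0 < dem Λ q R' then (1 - w) * R' + w else R'

/-- Full-fill total profit over horizon `N`. -/
def profit (α w Λ q p c cA : ℝ) (A : ℕ → ℝ) (R1 : ℝ) (N : ℕ) : ℝ :=
  ∑ i ∈ Finset.range N,
    ((p - c) * dem Λ q (frep α (rep α w Λ q A R1 i) (A i)) - cA * A i)

section

variable {α w Λ q : ℝ}

lemma dem_nonneg (Λ q x : ℝ) : 0 ≤ dem Λ q x := by
  unfold dem
  split_ifs
  exacts [le_max_left _ _, le_rfl]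

lemma dem_mono (hΛ : 0 ≤ Λ) (hq : 0 ≤ q) : Monotone (dem Λ q) := by
  intro x y hxy
  by_cases hx : 0 < x
  · have hy : 0 < y := hx.trans_le hxy
    have hdiv : q / y ≤ q / x := div_le_div_of_nonneg_left hq hx hxy
    simp only [dem, if_pos hx, if_pos hy]
    gcongr
  · simp only [dem, if_neg hx]
    exact dem_nonneg Λ q y

lemma frep_le_one (hα : 0 ≤ α) {R a : ℝ} (hR : R ≤ 1) (ha0 : 0 ≤ a) (ha1 : a ≤ 1) :
    frep α R a ≤ 1 := by
  have := Real.rpow_le_one ha0 ha1 hα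
  unfold frep
  nlinarith

lemma frep_mono_rep (hα : 0 ≤ α) {R R' a : ℝ} (hRR' : R ≤ R') (ha0 : 0 ≤ a) (ha1 : a ≤ 1) :
    frep α R a ≤ frep α R' a := by
  have := Real.rpow_le_one ha0 ha1 hα
  unfold frep
  nlinarith

lemma frep_mono_adv (hα : 0 ≤ α) {R a b : ℝ} (hR : R ≤ 1) (ha : 0 ≤ a) (hab : a ≤ b) :
    frep α R a ≤ frep α R b := by
  have := Real.rpow_le_rpow ha hab hα
  unfold frep
  nlinarith

lemma frep_comm (α R a b : ℝ) : frep α (frep α R a) b = frep α (frep α R b) a := by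
  unfold frep
  ring

lemma frep_affine_comm (α w x a : ℝ) :
    frep α ((1 - w) * x + w) a = (1 - w) * frep α x a + w := by
  unfold frep
  ring

def repStep (w Λ q x : ℝ) : ℝ := if 0 < dem Λ q x then (1 - w) * x + w else x

lemma rep_succ (A : ℕ → ℝ) (R1 : ℝ) (i : ℕ) :
    rep α w Λ q A R1 (i + 1) = repStep w Λ q (frep α (rep α w Λ q A R1 i) (A i)) := rfl

lemma repStep_le_one (hw1 : w ≤ 1) {x : ℝ} (hx : x ≤ 1) : repStep w Λ q x ≤ 1 := by
  unfold repStep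
  split_ifs <;> nlinarith

lemma le_repStep (hw0 : 0 ≤ w) {x : ℝ} (hx : x ≤ 1) : x ≤ repStep w Λ q x := by
  unfold repStep
  split_ifs <;> nlinarith

lemma repStep_mono (hΛ : 0 ≤ Λ) (hq : 0 ≤ q) (hw0 : 0 ≤ w) (hw1 : w ≤ 1) {x y : ℝ}
    (hxy : x ≤ y) (hy : y ≤ 1) : repStep w Λ q x ≤ repStep w Λ q y := by
  by_cases hdx : 0 < dem Λ q x
  · have hdy : 0 < dem Λ q y := hdx.trans_le (dem_mono hΛ hq hxy)
    simp only [repStep, if_pos hdx, if_pos hdy]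
    nlinarith
  · calc repStep w Λ q x = x := if_neg hdx
      _ ≤ y := hxy
      _ ≤ repStep w Λ q y := le_repStep hw0 hy

lemma frep_repStep_frep_le_swap (hα : 0 ≤ α) (hΛ : 0 ≤ Λ) (hq : 0 ≤ q) (hw0 : 0 ≤ w)
    {R L H : ℝ} (hR : R ≤ 1) (hL0 : 0 ≤ L) (hLH : L ≤ H) (hH1 : H ≤ 1) :
    frep α (repStep w Λ q (frep α R L)) H ≤ frep α (repStep w Λ q (frep α R H)) L := by
  have hRLH : frep α R L ≤ frep α R H := frep_mono_adv hα hR hL0 hLH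
  by_cases hdL : 0 < dem Λ q (frep α R L)
  · have hdH : 0 < dem Λ q (frep α R H) := hdL.trans_le (dem_mono hΛ hq hRLH)
    simp only [repStep, if_pos hdL, if_pos hdH, frep_affine_comm, frep_comm, le_refl]
  · calc frep α (repStep w Λ q (frep α R L)) H = frep α (frep α R H) L := by
          rw [repStep, if_neg hdL, frep_comm]
      _ ≤ frep α (repStep w Λ q (frep α R H)) L :=
          frep_mono_rep hα (le_repStep hw0 (frep_le_one hα hR (hL0.trans hLH) hH1)) hL0
            (hLH.trans hH1)

/-- The paper's `R'_i`. -/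
def postRep (α w Λ q : ℝ) (A : ℕ → ℝ) (R1 : ℝ) (i : ℕ) : ℝ :=
  frep α (rep α w Λ q A R1 i) (A i)

lemma postRep_succ (A : ℕ → ℝ) (R1 : ℝ) (i : ℕ) :
    postRep α w Λ q A R1 (i + 1) = frep α (repStep w Λ q (postRep α w Λ q A R1 i)) (A (i + 1)) :=
  rfl

variable {A B : ℕ → ℝ} {R1 : ℝ}

lemma rep_congr {n : ℕ} (hAB : ∀ i < n, A i = B i) :
    rep α w Λ q A R1 n = rep α w Λ q B R1 n := by
  induction n with
  | zero => rfl
  | succ n ih =>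
    rw [rep_succ, rep_succ, ih fun i hi => hAB i (by omega), hAB n n.lt_succ_self]

lemma rep_le_one (hα : 0 ≤ α) (hw1 : w ≤ 1) (hA : ∀ i, A i ∈ Set.Icc 0 1) (hR1 : R1 ≤ 1)
    (i : ℕ) : rep α w Λ q A R1 i ≤ 1 := by
  induction i with
  | zero => exact hR1
  | succ n ih => exact repStep_le_one hw1 (frep_le_one hα ih (hA n).1 (hA n).2)

lemma postRep_le_one (hα : 0 ≤ α) (hw1 : w ≤ 1) (hA : ∀ i, A i ∈ Set.Icc 0 1) (hR1 : R1 ≤ 1)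
    (i : ℕ) : postRep α w Λ q A R1 i ≤ 1 :=
  frep_le_one hα (rep_le_one hα hw1 hA hR1 i) (hA i).1 (hA i).2

lemma postRep_le_of_eq_from (hα : 0 ≤ α) (hΛ : 0 ≤ Λ) (hq : 0 ≤ q) (hw0 : 0 ≤ w) (hw1 : w ≤ 1)
    (hB : ∀ i, B i ∈ Set.Icc 0 1) (hR1 : R1 ≤ 1) {m : ℕ}
    (hm : postRep α w Λ q A R1 m ≤ postRep α w Λ q B R1 m) (hAB : ∀ i, m < i → A i = B i)
    {n : ℕ} (hmn : m ≤ n) : postRep α w Λ q A R1 n ≤ postRep α w Λ q B R1 n := by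
  induction n, hmn using Nat.le_induction with
  | base => exact hm
  | succ n hmn ih =>
    rw [postRep_succ, postRep_succ, hAB (n + 1) (by omega)]
    exact frep_mono_rep hα (repStep_mono hΛ hq hw0 hw1 ih (postRep_le_one hα hw1 hB hR1 n))
      (hB _).1 (hB _).2

lemma profit_eq (α w Λ q p c cA : ℝ) (A : ℕ → ℝ) (R1 : ℝ) (N : ℕ) :
    profit α w Λ q p c cA A R1 N =
      (p - c) * ∑ i ∈ Finset.range N, dem Λ q (postRep α w Λ q A R1 i) -
        cA * ∑ i ∈ Finset.range N, A i := by
  rw [profit, Finset.sum_sub_distrib, Finset.mul_sum, Finset.mul_sum]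
  rfl

lemma sum_range_comp_swap (A : ℕ → ℝ) {k N : ℕ} (hk : k + 2 ≤ N) :
    ∑ i ∈ Finset.range N, A (Equiv.swap k (k + 1) i) = ∑ i ∈ Finset.range N, A i := by
  refine Equiv.Perm.sum_comp _ _ A fun i hi => ?_
  by_contra hiN
  simp only [Finset.coe_range, Set.mem_Iio, not_lt] at hiN
  exact hi (Equiv.swap_apply_of_ne_of_ne (by omega) (by omega))

end

/-- Periods are 0-indexed: `k` and `k + 1` are consecutive periods within the horizon `N`. -/
theorem exchange_lemma_variable_capacity_general
    (Λ c p cA m u α w L H q : ℝ) (N k : ℕ)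
    (hΛ : 0 < Λ) (hc : 0 < c) (hcp : c < p)
    (hm : 0 < m) (hu : 0 ≤ u) (hqdef : q = (u + p) / m)
    (hα : 0 < α) (hw0 : 0 ≤ w) (hw1 : w ≤ 1)
    (hL0 : 0 ≤ L) (hLH : L < H) (hH1 : H ≤ 1)
    (hk : k + 2 ≤ N)
    (V Q : ℕ → ℝ) (hV : ∀ i, V i = L ∨ V i = H)
    (hVk : V k = L) (hVk1 : V (k + 1) = H)
    (hQk : Q k = H) (hQk1 : Q (k + 1) = L)
    (hQother : ∀ i, i ≠ k → i ≠ k + 1 → Q i = V i)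
    (R1 : ℝ) (hR11 : R1 ≤ 1) :
    profit α w Λ q p c cA V R1 N ≤ profit α w Λ q p c cA Q R1 N := by
  have hq : 0 ≤ q := hqdef ▸ div_nonneg (by linarith) hm.le
  have hVI : ∀ i, V i ∈ Set.Icc 0 1 := fun i => by
    rcases hV i with h | h <;> rw [h] <;> constructor <;> linarith
  have hQV : ∀ i, Q i = V (Equiv.swap k (k + 1) i) := fun i => by
    by_cases hik : i = k
    · rw [hik, Equiv.swap_apply_left, hQk, hVk1]
    by_cases hik1 : i = k + 1
    · rw [hik1, Equiv.swap_apply_right, hQk1, hVk]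
    rw [Equiv.swap_apply_of_ne_of_ne hik hik1, hQother i hik hik1]
  have hQI : ∀ i, Q i ∈ Set.Icc 0 1 := fun i => hQV i ▸ hVI _
  have hrep : rep α w Λ q Q R1 k = rep α w Λ q V R1 k :=
    rep_congr fun i hi => hQother i hi.ne (by omega)
  have hRk : rep α w Λ q V R1 k ≤ 1 := rep_le_one hα.le hw1 hVI hR11 k
  have hpost : ∀ i, postRep α w Λ q V R1 i ≤ postRep α w Λ q Q R1 i := by
    intro i
    rcases lt_trichotomy i k with hik | rfl | hik
    · rw [postRep, postRep, rep_congr fun j hj => (hQother j (by omega) (by omega)).symm,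
        hQother i hik.ne (by omega)]
    · rw [postRep, postRep, hrep, hVk, hQk]
      exact frep_mono_adv hα.le hRk hL0 hLH.le
    · refine postRep_le_of_eq_from hα.le hΛ.le hq hw0 hw1 hQI hR11 ?_
        (fun j hj => (hQother j (by omega) (by omega)).symm) hik
      rw [postRep_succ, postRep_succ, postRep, postRep, hrep, hVk, hVk1, hQk, hQk1]
      exact frep_repStep_frep_le_swap hα.le hΛ.le hq hw0 hRk hL0 hLH.le hH1
  rw [profit_eq, profit_eq, Finset.sum_congr rfl fun i _ => hQV i, sum_range_comp_swap V hk]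
  gcongr with i
  exact dem_mono hΛ.le hq (hpost i)

/-- Exchange lemma: swapping an adjacent pair `(L, H)` in the advertisement
sequence to `(H, L)` does not decrease the full-fill total profit.
(Periods are 0-indexed: `k` and `k+1` are consecutive periods within the
horizon `N`.) -/
theorem exchange_lemma_variable_capacity
    (Λ c p cA m u α w L H q : ℝ) (N k : ℕ)
    (hΛ : 0 < Λ) (hc : 0 < c) (hcp : c < p) (hcA : 0 ≤ cA)
    (hm : 0 < m) (hu : 0 ≤ u) (hqdef : q = (u + p) / m) (hq1 : q < 1)
    (hα : 0 < α) (hw0 : 0 ≤ w) (hw1 : w ≤ 1)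
    (hL0 : 0 ≤ L) (hLH : L < H) (hH1 : H ≤ 1)
    (hk : k + 2 ≤ N)
    (V Q : ℕ → ℝ) (hV : ∀ i, V i = L ∨ V i = H)
    (hVk : V k = L) (hVk1 : V (k + 1) = H)
    (hQk : Q k = H) (hQk1 : Q (k + 1) = L)
    (hQother : ∀ i, i ≠ k → i ≠ k + 1 → Q i = V i)
    (R1 : ℝ) (hR10 : 0 ≤ R1) (hR11 : R1 ≤ 1) :
    profit α w Λ q p c cA V R1 N ≤ profit α w Λ q p c cA Q R1 N :=
  exchange_lemma_variable_capacity_general Λ c p cA m u α w L H q N k hΛ hc hcp hm hu hqdef hα hw0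
    hw1 hL0 hLH hH1 hk V Q hV hVk hVk1 hQk hQk1 hQother R1 hR11
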